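/- arXiv:0903.1818 — 3 statements merged into one kernel-verified Lean document; each statement's English description precedes it below -/
import Mathlib

section
/- For all n ∈ ℕ, the set S_n defined by the recursion S_0 = {(0,0)}, S_{i+1} = S_i ∪ (S_i + 2^i·V) where V = {(1,0),(0,1)} and A + cB = {m + c·n : m ∈ A, n ∈ B}, has cardinality |S_n| = 3^n. -/
/-- `sadd A c B = A + c·B = {a + c•b : a ∈ A, b ∈ B}` in ℤ². -/
def sadd (A : Set (ℤ × ℤ)) (c : ℤ) (B : Set (ℤ × ℤ)) : Set (ℤ × ℤ) :=
  {p | ∃ a ∈ A, ∃ b ∈ B, p = a + c • b}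

def V : Set (ℤ × ℤ) := {(1, 0), (0, 1)}

/-- Stages of the standard discrete Sierpinski triangle. -/
def Sst : ℕ → Set (ℤ × ℤ)
  | 0 => {(0, 0)}
  | i + 1 => Sst i ∪ sadd (Sst i) (2 ^ i) V

/-!
`S (i+1)` is `S i` together with its translates by `(2^i, 0)` and `(0, 2^i)`. Since `S i` lies in
the triangle `x, y ≥ 0, x + y < 2^i`, these three copies are pairwise disjoint (the translates have
coordinate sum `≥ 2^i`, and they are separated by which coordinate is `≥ 2^i`), and together they
lie in the triangle of side `2^(i+1)`. Hence the cardinality triples at each step.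
-/

def triangle (c : ℤ) : Set (ℤ × ℤ) := {p | 0 ≤ p.1 ∧ 0 ≤ p.2 ∧ p.1 + p.2 < c}

theorem sadd_V (A : Set (ℤ × ℤ)) (c : ℤ) :
    sadd A c V = (· + (c, 0)) '' A ∪ (· + (0, c)) '' A := by
  ext p
  constructor
  · rintro ⟨a, ha, b, hb | hb, rfl⟩ <;> subst hb
    · exact .inl ⟨a, ha, by simp⟩
    · exact .inr ⟨a, ha, by simp⟩
  · rintro (⟨a, ha, rfl⟩ | ⟨a, ha, rfl⟩)
    · exact ⟨a, ha, (1, 0), .inl rfl, by simp⟩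
    · exact ⟨a, ha, (0, 1), .inr rfl, by simp⟩

section Triangle

variable {A : Set (ℤ × ℤ)} {c : ℤ}

theorem disjoint_translates_of_subset_triangle (hA : A ⊆ triangle c) :
    Disjoint ((· + (c, 0)) '' A) ((· + (0, c)) '' A) := by
  rw [Set.disjoint_left]
  rintro _ ⟨a, ha, rfl⟩ ⟨b, hb, hab⟩
  have hsnd : b.2 + c = a.2 := by simpa using congrArg Prod.snd hab
  obtain ⟨ha1, -, ha⟩ := hA ha
  obtain ⟨-, hb2, -⟩ := hA hb
  omega

theorem le_add_of_mem_sadd_V (hA : A ⊆ triangle c) {p : ℤ × ℤ} (hp : p ∈ sadd A c V) :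
    c ≤ p.1 + p.2 := by
  rw [sadd_V] at hp
  rcases hp with ⟨a, ha, rfl⟩ | ⟨a, ha, rfl⟩ <;>
  · obtain ⟨h1, h2, -⟩ := hA ha
    simp only [Prod.fst_add, Prod.snd_add]
    omega

theorem disjoint_sadd_V_of_subset_triangle (hA : A ⊆ triangle c) : Disjoint A (sadd A c V) :=
  Set.disjoint_left.2 fun _ hp hp' => (hA hp).2.2.not_ge (le_add_of_mem_sadd_V hA hp')

theorem Set.Finite.sadd_V (hfin : A.Finite) : (sadd A c V).Finite := by
  rw [_root_.sadd_V]
  exact (hfin.image _).union (hfin.image _)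

theorem ncard_sadd_V (hA : A ⊆ triangle c) (hfin : A.Finite) :
    (sadd A c V).ncard = 2 * A.ncard := by
  rw [sadd_V, Set.ncard_union_eq (disjoint_translates_of_subset_triangle hA) (hfin.image _)
    (hfin.image _), Set.ncard_image_of_injective _ (add_left_injective _),
    Set.ncard_image_of_injective _ (add_left_injective _)]
  ring

theorem union_sadd_V_subset_triangle (hA : A ⊆ triangle c) :
    A ∪ sadd A c V ⊆ triangle (2 * c) := by
  rintro p (hp | hp)
  · obtain ⟨h1, h2, h3⟩ := hA hp
    exact ⟨h1, h2, by omega⟩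
  · rw [sadd_V] at hp
    rcases hp with ⟨a, ha, rfl⟩ | ⟨a, ha, rfl⟩ <;>
    · obtain ⟨h1, h2, h3⟩ := hA ha
      refine ⟨?_, ?_, ?_⟩ <;> simp only [Prod.fst_add, Prod.snd_add] <;> omega

end Triangle

theorem Sst_subset_triangle (n : ℕ) : Sst n ⊆ triangle (2 ^ n) := by
  induction n with
  | zero => simp [Sst, triangle]
  | succ n ih => simpa only [pow_succ', Sst] using union_sadd_V_subset_triangle ih

theorem Sst_finite (n : ℕ) : (Sst n).Finite := by
  induction n with
  | zero => exact Set.finite_singleton _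
  | succ n ih => exact ih.union ih.sadd_V

theorem stmt0 (n : ℕ) : (Sst n).ncard = 3 ^ n := by
  induction n with
  | zero => simp [Sst]
  | succ n ih =>
    have hT := Sst_subset_triangle n
    have hfin := Sst_finite n
    rw [Sst, Set.ncard_union_eq (disjoint_sadd_V_of_subset_triangle hT) hfin hfin.sadd_V,
      ncard_sadd_V hT hfin, ih]
    ring
end

section
/- The standard discrete Sierpinski triangle 𝐒 = ⋃_{i} S_i equals the set of all (k,l) ∈ ℕ² such that the binomial coefficient C(k+l, k) is odd. -/
/-!
By Lucas' theorem modulo 2, `(k + l).choose k` is odd exactly when adding `k` and `l` in binary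
produces no carry, i.e. when `k &&& l = 0`. On the other side, `Sst i` is the set of pairs of
`i`-bit numbers with disjoint binary digits: the step from `Sst i` to `Sst (i + 1)` gives the
leading bit `2 ^ i` to at most one of the two coordinates.
-/

namespace Nat

theorem and_eq_zero_iff_div_two {k l : ℕ} :
    k &&& l = 0 ↔ ¬(k % 2 = 1 ∧ l % 2 = 1) ∧ k / 2 &&& l / 2 = 0 := by
  have hmod : (k &&& l) % 2 = k % 2 &&& l % 2 := by simpa using Nat.and_mod_two_pow (n := 1)
  rw [← Nat.and_div_two]
  have hx : k &&& l = 0 ↔ (k &&& l) % 2 = 0 ∧ (k &&& l) / 2 = 0 := by omega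
  rw [hx, hmod]
  rcases Nat.mod_two_eq_zero_or_one k with hk | hk <;>
    rcases Nat.mod_two_eq_zero_or_one l with hl | hl <;> simp [hk, hl]

theorem odd_choose_add_iff_div_two {k l : ℕ} :
    Odd ((k + l).choose k) ↔ ¬(k % 2 = 1 ∧ l % 2 = 1) ∧ Odd ((k / 2 + l / 2).choose (k / 2)) := by
  have lucas : (k + l).choose k % 2 = _ :=
    Choose.choose_modEq_choose_mod_mul_choose_div_nat (p := 2) (n := k + l) (k := k)
  simp only [Nat.odd_iff]
  by_cases hcarry : k % 2 = 1 ∧ l % 2 = 1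
  · have hsum : (k + l) % 2 = 0 := by omega
    rw [hsum, hcarry.1, Nat.choose_zero_succ, zero_mul] at lucas
    simpa [hcarry] using lucas
  · have hsum : (k + l) % 2 = k % 2 + l % 2 := by omega
    have hdiv : (k + l) / 2 = k / 2 + l / 2 := by omega
    have hbit : (k % 2 + l % 2).choose (k % 2) = 1 := by
      rcases Nat.mod_two_eq_zero_or_one k with hk | hk <;>
        rcases Nat.mod_two_eq_zero_or_one l with hl | hl <;> simp_all
    rw [hsum, hdiv, hbit, one_mul] at lucas
    simp [hcarry, lucas]

theorem odd_choose_add_iff_and_eq_zero (k l : ℕ) : Odd ((k + l).choose k) ↔ k &&& l = 0 := by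
  induction k using Nat.strong_induction_on generalizing l with
  | _ k ih =>
    rcases Nat.eq_zero_or_pos k with rfl | hk
    · simp
    · rw [odd_choose_add_iff_div_two, and_eq_zero_iff_div_two, ih (k / 2) (by omega)]

theorem add_two_pow_and_of_lt {i k l : ℕ} (hl : l < 2 ^ i) : (k + 2 ^ i) &&& l = k &&& l := by
  calc (k + 2 ^ i) &&& l = ((k + 2 ^ i) &&& l) % 2 ^ i :=
        (Nat.mod_eq_of_lt (Nat.and_lt_two_pow _ hl)).symm
    _ = (k &&& l) % 2 ^ i := by rw [Nat.and_mod_two_pow, Nat.and_mod_two_pow, Nat.add_mod_right]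
    _ = k &&& l := Nat.mod_eq_of_lt (Nat.and_lt_two_pow _ hl)

theorem and_add_two_pow_of_lt {i k l : ℕ} (hk : k < 2 ^ i) : k &&& (l + 2 ^ i) = k &&& l := by
  rw [Nat.and_comm, add_two_pow_and_of_lt hk, Nat.and_comm]

theorem and_ne_zero_of_two_pow_le {i k l : ℕ} (hk : 2 ^ i ≤ k) (hk' : k < 2 ^ (i + 1))
    (hl : 2 ^ i ≤ l) (hl' : l < 2 ^ (i + 1)) : k &&& l ≠ 0 := by
  have hdiv : ∀ m, 2 ^ i ≤ m → m < 2 ^ (i + 1) → m / 2 ^ i = 1 := fun m h h' =>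
    Nat.div_eq_of_lt_le (by omega) (by rw [pow_succ] at h'; omega)
  intro h
  have := congrArg (· / 2 ^ i) h
  simp only [Nat.and_div_two_pow, hdiv k hk hk', hdiv l hl hl', Nat.zero_div] at this
  exact absurd this (by decide)

end Nat

def bitDisjointPairs (i : ℕ) : Set (ℕ × ℕ) :=
  {q | q.1 < 2 ^ i ∧ q.2 < 2 ^ i ∧ q.1 &&& q.2 = 0}

theorem bitDisjointPairs_succ (i : ℕ) :
    bitDisjointPairs (i + 1) = bitDisjointPairs i ∪
      ((· + (2 ^ i, 0)) '' bitDisjointPairs i ∪ (· + (0, 2 ^ i)) '' bitDisjointPairs i) := by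
  ext ⟨k, l⟩
  have hpow : 2 ^ (i + 1) = 2 ^ i + 2 ^ i := by rw [pow_succ, mul_two]
  simp only [bitDisjointPairs, Set.mem_union, Set.mem_image, Set.mem_ofPred_eq, Prod.exists,
    Prod.mk_add_mk, Prod.mk.injEq, add_zero]
  constructor
  · rintro ⟨hk, hl, hkl⟩
    rcases lt_or_ge k (2 ^ i) with hk' | hk' <;> rcases lt_or_ge l (2 ^ i) with hl' | hl'
    · exact Or.inl ⟨hk', hl', hkl⟩
    · obtain ⟨b, rfl⟩ := Nat.exists_eq_add_of_le' hl'
      rw [Nat.and_add_two_pow_of_lt hk'] at hkl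
      exact Or.inr (Or.inr ⟨k, b, ⟨hk', by omega, hkl⟩, rfl, rfl⟩)
    · obtain ⟨a, rfl⟩ := Nat.exists_eq_add_of_le' hk'
      rw [Nat.add_two_pow_and_of_lt hl'] at hkl
      exact Or.inr (Or.inl ⟨a, l, ⟨by omega, hl', hkl⟩, rfl, rfl⟩)
    · exact absurd hkl (Nat.and_ne_zero_of_two_pow_le hk' hk hl' hl)
  · rintro (⟨hk, hl, hkl⟩ | ⟨a, b, ⟨ha, hb, hab⟩, rfl, rfl⟩ | ⟨a, b, ⟨ha, hb, hab⟩, rfl, rfl⟩)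
    · exact ⟨by omega, by omega, hkl⟩
    · exact ⟨by omega, by omega, by rwa [Nat.add_two_pow_and_of_lt hb]⟩
    · exact ⟨by omega, by omega, by rwa [Nat.and_add_two_pow_of_lt ha]⟩

theorem Sst_eq_image (i : ℕ) :
    Sst i = (fun q : ℕ × ℕ => ((q.1 : ℤ), (q.2 : ℤ))) '' bitDisjointPairs i := by
  induction i with
  | zero => ext p; simp [Sst, bitDisjointPairs, eq_comm]
  | succ i ih =>
    rw [Sst, sadd_V, ih, bitDisjointPairs_succ, Set.image_union, Set.image_union]
    simp only [Set.image_image, Prod.fst_add, Prod.snd_add, Nat.cast_add, Nat.cast_pow,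
      Nat.cast_ofNat, add_zero, Prod.mk_add_mk]

theorem iUnion_bitDisjointPairs : (⋃ i, bitDisjointPairs i) = {q | q.1 &&& q.2 = 0} := by
  ext ⟨k, l⟩
  have hk : k < 2 ^ (k + l) := (Nat.le_add_right k l).trans_lt Nat.lt_two_pow_self
  have hl : l < 2 ^ (k + l) := (Nat.le_add_left l k).trans_lt Nat.lt_two_pow_self
  simp only [bitDisjointPairs, Set.mem_iUnion, Set.mem_ofPred_eq]
  exact ⟨fun ⟨_, _, _, h⟩ => h, fun h => ⟨k + l, hk, hl, h⟩⟩

theorem stmt3 :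
    (⋃ i, Sst i) =
      {p : ℤ × ℤ | ∃ k l : ℕ, p = ((k : ℤ), (l : ℤ)) ∧ Odd (Nat.choose (k + l) k)} := by
  simp_rw [Sst_eq_image, ← Set.image_iUnion, iUnion_bitDisjointPairs,
    Nat.odd_choose_add_iff_and_eq_zero]
  ext p
  simp [eq_comm, and_comm]
end

section
/- The zeta-dimension of the standard discrete Sierpinski triangle 𝐒 equals log₂ 3, where zeta-dimension of A ⊆ ℕ² is defined via Dim_ζ(A) = limsup_{n→∞} log₂|A ∩ {(i,j) : i+j ≤ n}| / log₂ n. -/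
/-!
By Lucas' theorem mod 2, `(a, b) ∈ SS` iff `(a / 2, b / 2) ∈ SS` and the last binary digits of
`a` and `b` are not both `1`. Splitting off these digits identifies the points of `SS` with
`a + b < 2 ^ (j + 1)` with three copies of those with `a + b < 2 ^ j`, so there are exactly `3 ^ j`
of the latter. Sandwiching `n` between `2 ^ Nat.log 2 n` and `2 ^ (Nat.log 2 n + 1)` then gives
`3 ^ Nat.log 2 n ≤ |SS_{≤ n}| ≤ 3 ^ (Nat.log 2 n + 1)`, and since `Nat.log 2 n / logb 2 n → 1`
the ratio `logb 2 |SS_{≤ n}| / logb 2 n` converges, not just in limsup, to `logb 2 3`.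
-/

open Filter

/-- The standard discrete Sierpinski triangle as a subset of ℕ². -/
def SS : Set (ℕ × ℕ) := {p | Odd (Nat.choose (p.1 + p.2) p.1)}

open Topology

theorem Nat.odd_choose_iff_odd_choose_mod_two_and_div_two (n k : ℕ) :
    Odd (n.choose k) ↔ Odd ((n % 2).choose (k % 2)) ∧ Odd ((n / 2).choose (k / 2)) := by
  have := Fact.mk Nat.prime_two
  rw [Nat.odd_iff, Choose.choose_modEq_choose_mod_mul_choose_div_nat, ← Nat.odd_iff, Nat.odd_mul]

theorem mem_SS_iff_halves (a b : ℕ) :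
    (a, b) ∈ SS ↔ (a / 2, b / 2) ∈ SS ∧ ¬(a % 2 = 1 ∧ b % 2 = 1) := by
  simp only [SS, Set.mem_ofPred_eq, Nat.odd_choose_iff_odd_choose_mod_two_and_div_two (a + b)]
  by_cases hcarry : a % 2 = 1 ∧ b % 2 = 1
  · rw [show (a + b) % 2 = 0 by omega, hcarry.1]
    simp [hcarry]
  · have hlast : (a % 2 + b % 2).choose (a % 2) = 1 := by
      rcases Nat.mod_two_eq_zero_or_one a with ha | ha <;> simp_all
    rw [show (a + b) / 2 = a / 2 + b / 2 by omega, show (a + b) % 2 = a % 2 + b % 2 by omega,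
      hlast]
    simp [hcarry]

theorem halves_injective :
    Function.Injective fun p : ℕ × ℕ => ((p.1 / 2, p.2 / 2), (p.1 % 2, p.2 % 2)) := by
  rintro ⟨a, b⟩ ⟨c, d⟩ h
  simp only [Prod.mk.injEq] at h ⊢
  omega

theorem image_halves_SS_lt_two_pow_succ (j : ℕ) :
    (fun p : ℕ × ℕ => ((p.1 / 2, p.2 / 2), (p.1 % 2, p.2 % 2))) ''
        {p ∈ SS | p.1 + p.2 < 2 ^ (j + 1)} =
      {q ∈ SS | q.1 + q.2 < 2 ^ j} ×ˢ {(0, 0), (1, 0), (0, 1)} := by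
  ext ⟨⟨c, d⟩, r, s⟩
  simp only [Set.mem_image, Set.mem_ofPred_eq, Set.mem_prod, Set.mem_insert_iff,
    Set.mem_singleton_iff, Prod.mk.injEq, Prod.exists, pow_succ]
  constructor
  · rintro ⟨a, b, ⟨hab, hlt⟩, ⟨rfl, rfl⟩, rfl, rfl⟩
    rw [mem_SS_iff_halves] at hab
    exact ⟨⟨hab.1, by omega⟩, by omega⟩
  · rintro ⟨⟨hcd, hlt⟩, hrs⟩
    refine ⟨2 * c + r, 2 * d + s, ⟨?_, by omega⟩, ⟨by omega, by omega⟩, by omega, by omega⟩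
    rw [mem_SS_iff_halves]
    refine ⟨?_, by omega⟩
    convert hcd using 3 <;> omega

theorem ncard_SS_lt_two_pow (j : ℕ) : {p ∈ SS | p.1 + p.2 < 2 ^ j}.ncard = 3 ^ j := by
  induction j with
  | zero =>
    have : {p ∈ SS | p.1 + p.2 < 2 ^ 0} = {(0, 0)} := by
      ext ⟨a, b⟩
      simp only [SS, Set.mem_ofPred_eq, Set.mem_singleton_iff, Prod.mk.injEq, pow_zero]
      constructor
      · omega
      · rintro ⟨rfl, rfl⟩; simp
    rw [this, Set.ncard_singleton, pow_zero]
  | succ j ih =>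
    rw [← Set.ncard_image_of_injective _ halves_injective, image_halves_SS_lt_two_pow_succ,
      Set.ncard_prod, ih, pow_succ]
    simp [Set.ncard_insert_of_notMem]

theorem finite_SS_lt_two_pow (j : ℕ) : {p ∈ SS | p.1 + p.2 < 2 ^ j}.Finite :=
  Set.finite_of_ncard_ne_zero (by rw [ncard_SS_lt_two_pow]; positivity)

theorem ncard_SS_le_le_pow_log_succ (n : ℕ) :
    {p ∈ SS | p.1 + p.2 ≤ n}.ncard ≤ 3 ^ (Nat.log 2 n + 1) := by
  have hn := Nat.lt_pow_succ_log_self one_lt_two n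
  rw [← ncard_SS_lt_two_pow]
  exact Set.ncard_le_ncard (fun p ⟨hp, hle⟩ => ⟨hp, by omega⟩) (finite_SS_lt_two_pow _)

theorem pow_log_le_ncard_SS_le {n : ℕ} (hn : n ≠ 0) :
    3 ^ Nat.log 2 n ≤ {p ∈ SS | p.1 + p.2 ≤ n}.ncard := by
  have hlog := Nat.pow_log_le_self 2 hn
  have hn' := Nat.lt_pow_succ_log_self one_lt_two n
  rw [← ncard_SS_lt_two_pow]
  refine Set.ncard_le_ncard (fun p ⟨hp, hle⟩ => ⟨hp, by omega⟩) ?_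
  exact (finite_SS_lt_two_pow (Nat.log 2 n + 1)).subset fun p ⟨hp, hle⟩ => ⟨hp, by omega⟩

theorem tendsto_natLog_div_logb {b : ℕ} (hb : 1 < b) :
    Tendsto (fun n : ℕ => (Nat.log b n : ℝ) / Real.logb b n) atTop (𝓝 1) := by
  have hlogb := (Real.tendsto_logb_atTop (b := b) (by exact_mod_cast hb)).comp
    tendsto_natCast_atTop_atTop
  simpa [Function.comp_def, Real.natFloor_logb_natCast] using
    (tendsto_nat_floor_div_atTop (R := ℝ)).comp hlogb

theorem tendsto_logb_div_logb_of_pow_log_le {b : ℕ} (hb : 1 < b) {a : ℝ} (ha : 0 < a)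
    {N : ℕ → ℝ} (hN : ∀ᶠ n in atTop, a ^ Nat.log b n ≤ N n ∧ N n ≤ a ^ (Nat.log b n + 1)) :
    Tendsto (fun n => Real.logb b (N n) / Real.logb b n) atTop (𝓝 (Real.logb b a)) := by
  set c := Real.logb b a
  have hb' : (1 : ℝ) < b := by exact_mod_cast hb
  have hlogb := (Real.tendsto_logb_atTop hb').comp tendsto_natCast_atTop_atTop
  have hratio := tendsto_natLog_div_logb hb
  have lower : Tendsto (fun n : ℕ => Nat.log b n * c / Real.logb b n) atTop (𝓝 c) := by
    simpa [mul_div_right_comm] using hratio.mul_const c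
  have upper : Tendsto (fun n : ℕ => (Nat.log b n + 1) * c / Real.logb b n) atTop (𝓝 c) := by
    have := (hratio.mul_const c).add ((tendsto_inv_atTop_zero.comp hlogb).mul_const c)
    simpa [add_mul, add_div, mul_div_right_comm, inv_mul_eq_div] using this
  have bounds : ∀ᶠ n in atTop,
      Nat.log b n * c ≤ Real.logb b (N n) ∧ Real.logb b (N n) ≤ (Nat.log b n + 1) * c := by
    filter_upwards [hN] with n ⟨hlo, hhi⟩
    constructor
    · calc Nat.log b n * c = Real.logb b (a ^ Nat.log b n) := by rw [Real.logb_pow]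
        _ ≤ Real.logb b (N n) := Real.logb_le_logb_of_le hb' (by positivity) hlo
    · calc Real.logb b (N n) ≤ Real.logb b (a ^ (Nat.log b n + 1)) :=
            Real.logb_le_logb_of_le hb' (lt_of_lt_of_le (by positivity) hlo) hhi
        _ = (Nat.log b n + 1) * c := by rw [Real.logb_pow]; push_cast; rfl
  refine tendsto_of_tendsto_of_tendsto_of_le_of_le' lower upper ?_ ?_ <;>
    filter_upwards [bounds, hlogb.eventually_gt_atTop 0] with n hn hpos
  exacts [div_le_div_of_nonneg_right hn.1 hpos.le, div_le_div_of_nonneg_right hn.2 hpos.le]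

theorem stmt11 :
    atTop.limsup
        (fun n : ℕ =>
          Real.logb 2 (({p ∈ SS | p.1 + p.2 ≤ n}).ncard) / Real.logb 2 n) =
      Real.logb 2 3 := by
  have hcount : ∀ᶠ n : ℕ in atTop,
      (3 : ℝ) ^ Nat.log 2 n ≤ {p ∈ SS | p.1 + p.2 ≤ n}.ncard ∧
        ({p ∈ SS | p.1 + p.2 ≤ n}.ncard : ℝ) ≤ 3 ^ (Nat.log 2 n + 1) := by
    filter_upwards [eventually_ne_atTop 0] with n hn
    exact ⟨mod_cast pow_log_le_ncard_SS_le hn, mod_cast ncard_SS_le_le_pow_log_succ n⟩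
  simpa using (tendsto_logb_div_logb_of_pow_log_le one_lt_two three_pos hcount).limsup_eq
end
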